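/- The (ℤ₂×ℤ₂)-grading (gr5) of the Jordan algebra H₃(F), given by H_{(0,0)} = span{E₁,E₂,E₃}, H_{(0,1)} = span{S₂₃}, H_{(1,0)} = span{S₁₃}, H_{(1,1)} = span{S₁₂}, is indeed a (ℤ₂×ℤ₂)-grading (H_g∘H_h ⊆ H_{g+h} and H₃(F) = ⊕_{g} H_g), and it is fine: every abelian group grading of H₃(F) refining it has exactly the same set of nonzero homogeneous components. -/

import Mathlib

noncomputable section

open Matrix

variable (F : Type*) [Field F] [IsAlgClosed F] [CharZero F]

set_option linter.unusedSectionVars false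

/-- The space of symmetric 3×3 matrices over `F`, as a submodule of all 3×3 matrices. -/
def symSub : Submodule F (Matrix (Fin 3) (Fin 3) F) where
  carrier := {x | x.IsSymm}
  add_mem' := by
    intro a b ha hb
    simp only [Set.mem_setOf_eq, Matrix.IsSymm, Matrix.transpose_add] at *
    rw [ha, hb]
  zero_mem' := by simp [Matrix.IsSymm]
  smul_mem' := by
    intro c a ha
    simp only [Set.mem_setOf_eq, Matrix.IsSymm, Matrix.transpose_smul] at *
    rw [ha]

lemma mem_symSub {x : Matrix (Fin 3) (Fin 3) F} : x ∈ symSub F ↔ x.IsSymm := Iff.rfl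

/-- The Jordan algebra `H₃(F)` of symmetric 3×3 matrices. -/
abbrev H3 := ↥(symSub F)

lemma jmul_mem (x y : Matrix (Fin 3) (Fin 3) F) (hx : x.IsSymm) (hy : y.IsSymm) :
    ((1/2 : F) • (x * y + y * x)).IsSymm := by
  simp only [Matrix.IsSymm] at *
  rw [Matrix.transpose_smul, Matrix.transpose_add, Matrix.transpose_mul, Matrix.transpose_mul,
    hx, hy, add_comm]

/-- The Jordan product on `H₃(F)`: `x ∘ y = (xy + yx)/2`. -/
def jmulS (x y : H3 F) : H3 F :=
  ⟨(1/2 : F) • ((x : Matrix (Fin 3) (Fin 3) F) * y + (y : Matrix (Fin 3) (Fin 3) F) * x),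
    (mem_symSub F).mpr (jmul_mem F x y ((mem_symSub F).mp x.2) ((mem_symSub F).mp y.2))⟩

/-- The diagonal matrix unit `E_j`, as an element of `H₃(F)`. -/
def EJ (j : Fin 3) : H3 F :=
  ⟨Matrix.single j j 1, (mem_symSub F).mpr <| Matrix.IsSymm.ext fun a b => by
    simp [Matrix.single, and_comm]⟩

/-- The symmetrized off-diagonal matrix unit `S_{jk} = e_{jk} + e_{kj}`. -/
def SJ (j k : Fin 3) : H3 F :=
  ⟨Matrix.single j k 1 + Matrix.single k j 1, (mem_symSub F).mpr <|
    Matrix.IsSymm.ext fun a b => by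
      simp [Matrix.single, and_comm, add_comm]⟩

/-- A `G`-grading of the Jordan algebra `H₃(F)`. -/
def IsGrading {G : Type*} [AddCommGroup G] [DecidableEq G]
    (H : G → Submodule F (H3 F)) : Prop :=
  DirectSum.IsInternal H ∧ ∀ g h : G, ∀ x ∈ H g, ∀ y ∈ H h, jmulS F x y ∈ H (g + h)

/-- Equivalence of gradings. -/
def GradEquiv {G G' : Type*} (H : G → Submodule F (H3 F)) (H' : G' → Submodule F (H3 F)) :
    Prop :=
  ∃ (f : H3 F ≃ₗ[F] H3 F) (α : G → G'),
    (∀ x y : H3 F, f (jmulS F x y) = jmulS F (f x) (f y)) ∧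
    Set.BijOn α {g | H g ≠ ⊥} {g' | H' g' ≠ ⊥} ∧
    ∀ g, H g ≠ ⊥ → Submodule.map (f : H3 F →ₗ[F] H3 F) (H g) = H' (α g)

/-- The ℤ-grading (gr1) of `H₃(F)`. -/
def gr1 (I : F) : ℤ → Submodule F (H3 F) := fun n =>
  if n = 0 then Submodule.span F {EJ F 0, EJ F 1 + EJ F 2}
  else if n = 1 then Submodule.span F {(-I) • SJ F 0 1 + SJ F 0 2}
  else if n = -1 then Submodule.span F {I • SJ F 0 1 + SJ F 0 2}
  else if n = 2 then Submodule.span F {(-I) • EJ F 1 + I • EJ F 2 + SJ F 1 2}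
  else if n = -2 then Submodule.span F {I • EJ F 1 + (-I) • EJ F 2 + SJ F 1 2}
  else ⊥

/-- The ℤ₂-grading (gr2) of `H₃(F)`. -/
def gr2 : ZMod 2 → Submodule F (H3 F) := fun g =>
  if g = 0 then Submodule.span F {EJ F 0, EJ F 1, EJ F 2, SJ F 1 2}
  else Submodule.span F {SJ F 0 1, SJ F 0 2}

/-- The ℤ₃-grading (gr3) of `H₃(F)`. -/
def gr3 (I : F) : ZMod 3 → Submodule F (H3 F) := fun g =>
  if g = 0 then Submodule.span F {EJ F 0, EJ F 1 + EJ F 2}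
  else if g = 1 then
    Submodule.span F {SJ F 0 2 + (-I) • SJ F 0 1, I • EJ F 1 + (-I) • EJ F 2 + SJ F 1 2}
  else Submodule.span F {SJ F 0 2 + I • SJ F 0 1, (-I) • EJ F 1 + I • EJ F 2 + SJ F 1 2}

/-- The ℤ₄-grading (gr4) of `H₃(F)`. -/
def gr4 (I : F) : ZMod 4 → Submodule F (H3 F) := fun g =>
  if g = 0 then Submodule.span F {EJ F 0, EJ F 1 + EJ F 2}
  else if g = 1 then Submodule.span F {(-I) • SJ F 0 1 + SJ F 0 2}
  else if g = 2 then Submodule.span F {EJ F 1 - EJ F 2, SJ F 1 2}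
  else Submodule.span F {I • SJ F 0 1 + SJ F 0 2}

/-- The (ℤ₂×ℤ₂)-grading (gr5) of `H₃(F)`. -/
def gr5 : ZMod 2 × ZMod 2 → Submodule F (H3 F) := fun g =>
  if g = (0, 0) then Submodule.span F {EJ F 0, EJ F 1, EJ F 2}
  else if g = (0, 1) then Submodule.span F {SJ F 1 2}
  else if g = (1, 0) then Submodule.span F {SJ F 0 2}
  else Submodule.span F {SJ F 0 1}

/-- `H'` refines `H` if every nonzero homogeneous component of `H` is a (direct) sum of
homogeneous components of `H'`. -/
def Refines {G' G : Type*} (H' : G' → Submodule F (H3 F)) (H : G → Submodule F (H3 F)) :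
    Prop :=
  ∀ g, H g ≠ ⊥ → ∃ S : Set G', H g = ⨆ g' ∈ S, H' g'

/-- A grading is fine if every abelian group grading refining it has the same set of
nonzero homogeneous components. -/
def IsFine {G : Type*} [AddCommGroup G] [DecidableEq G]
    (H : G → Submodule F (H3 F)) : Prop :=
  ∀ (G' : Type) [AddCommGroup G'] [DecidableEq G'] (H' : G' → Submodule F (H3 F)),
    IsGrading F H' → Refines F H' H →
    {N : Submodule F (H3 F) | N ≠ ⊥ ∧ ∃ g', H' g' = N} =
      {N : Submodule F (H3 F) | N ≠ ⊥ ∧ ∃ g, H g = N}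

/-! Giving the row/column indices `0, 1, 2` the degrees `d = 0, (1,1), (1,0)` in `ℤ₂ × ℤ₂` and
the entry `(i, j)` the degree `d j - d i` grades matrix multiplication, hence the Jordan product;
`gr5` is the induced grading of `H₃(F)`.

It is fine: in a refinement each line `F S_jk` is a component, of degree `a_jk` say. The products
`S_ij ∘ S_jk = ½ S_ik` force `a_01 + a_02 = a_12` and its permutations, hence `2 a_jk = 0`, so
`E_j + E_k = S_jk ∘ S_jk` lies in the neutral component, and (as `2` is invertible) so does
the whole diagonal. -/

section Lattice

variable {α ι ι' : Type*} [CompleteLattice α]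

theorem iSupIndep.eq_of_le_of_ne_bot {t : ι → α} (ht : iSupIndep t) {i j : ι} (hi : t i ≠ ⊥)
    (hij : t i ≤ t j) : i = j := by
  by_contra h
  exact hi ((ht.pairwiseDisjoint h).eq_bot_of_le hij)

theorem exists_le_of_refines {H : ι → α} {H' : ι' → α} (hH : ⨆ g, H g = ⊤) (hH' : iSupIndep H')
    (href : ∀ g, H g ≠ ⊥ → ∃ S : Set ι', H g = ⨆ g' ∈ S, H' g') {g' : ι'} (hg' : H' g' ≠ ⊥) :
    ∃ g, H' g' ≤ H g := by
  by_contra! hnot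
  have hcover : ⊤ ≤ ⨆ (h) (_ : h ≠ g'), H' h := by
    rw [← hH]
    refine iSup_le fun g => ?_
    rcases eq_or_ne (H g) ⊥ with hg | hg
    · simp [hg]
    obtain ⟨S, hS⟩ := href g hg
    rw [hS]
    refine iSup₂_le fun h hh => le_iSup₂_of_le h ?_ le_rfl
    rintro rfl
    exact hnot g (hS ▸ le_biSup H' hh)
  exact hg' (disjoint_top.mp ((hH' g').mono_right hcover))

theorem setOf_ne_bot_eq_of_refines {H : ι → α} {H' : ι' → α} (hH : iSupIndep H)
    (hHtop : ⨆ g, H g = ⊤) (hH' : iSupIndep H')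
    (href : ∀ g, H g ≠ ⊥ → ∃ S : Set ι', H g = ⨆ g' ∈ S, H' g')
    (hsub : ∀ g, ∃ g', H g ≤ H' g') :
    {N | N ≠ ⊥ ∧ ∃ g', H' g' = N} = {N | N ≠ ⊥ ∧ ∃ g, H g = N} := by
  have hcomp : ∀ g, H g ≠ ⊥ → ∃ g', H' g' = H g := by
    intro g hg
    obtain ⟨g', hle⟩ := hsub g
    obtain ⟨g₂, hle₂⟩ := exists_le_of_refines hHtop hH' href (ne_bot_of_le_ne_bot hg hle)
    obtain rfl := hH.eq_of_le_of_ne_bot hg (hle.trans hle₂)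
    exact ⟨g', le_antisymm hle₂ hle⟩
  ext N
  constructor
  · rintro ⟨hN, g', rfl⟩
    obtain ⟨g, hle⟩ := exists_le_of_refines hHtop hH' href hN
    obtain ⟨g'', hg''⟩ := hcomp g (ne_bot_of_le_ne_bot hN hle)
    obtain rfl := hH'.eq_of_le_of_ne_bot hN (hg'' ▸ hle)
    exact ⟨hN, g, hg''.symm⟩
  · rintro ⟨hN, g, rfl⟩
    exact ⟨hN, hcomp g hN⟩

end Lattice

section Module

variable {K V ι : Type*} [DivisionRing K] [AddCommGroup V] [Module K V]

theorem iSupIndep.eq_of_mem_of_mem {R M : Type*} [Ring R] [AddCommGroup M] [Module R M]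
    {p : ι → Submodule R M} (hp : iSupIndep p) {x : M} (hx : x ≠ 0) {i j : ι} (hi : x ∈ p i)
    (hj : x ∈ p j) : i = j := by
  by_contra h
  exact hx (Submodule.disjoint_def.mp (hp.pairwiseDisjoint h) x hi hj)

theorem Submodule.span_singleton_le_of_le_span_singleton {N : Submodule K V} {v : V}
    (hN : N ≠ ⊥) (h : N ≤ K ∙ v) : K ∙ v ≤ N := by
  obtain ⟨x, hx, hx0⟩ := N.ne_bot_iff.mp hN
  obtain ⟨c, rfl⟩ := Submodule.mem_span_singleton.mp (h hx)
  rw [Submodule.span_singleton_le_iff_mem]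
  exact (N.smul_mem_iff (left_ne_zero_of_smul hx0)).mp hx

theorem Submodule.exists_span_singleton_le_of_eq_biSup {H : ι → Submodule K V} {S : Set ι}
    {v : V} (hv : v ≠ 0) (h : K ∙ v = ⨆ i ∈ S, H i) : ∃ i, K ∙ v ≤ H i := by
  have : ∃ i ∈ S, H i ≠ ⊥ := by
    by_contra! hbot
    exact hv (Submodule.span_singleton_eq_bot.mp (h.trans (iSup₂_eq_bot.mpr hbot)))
  obtain ⟨i, hi, hne⟩ := this
  exact ⟨i, Submodule.span_singleton_le_of_le_span_singleton hne (h ▸ le_biSup H hi)⟩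

theorem Submodule.iSupIndep_comap {R M M' ι : Type*} [Ring R] [AddCommGroup M] [Module R M]
    [AddCommGroup M'] [Module R M'] {f : M →ₗ[R] M'} (hf : Function.Injective f)
    {p : ι → Submodule R M'} (hp : iSupIndep p) : iSupIndep fun i => (p i).comap f := by
  intro i
  refine (Disjoint.mono_right (iSup₂_le fun j hj =>
    Submodule.comap_mono (le_iSup₂ (f := fun j (_ : j ≠ i) => p j) j hj)) ?_)
  rw [disjoint_iff, ← Submodule.comap_inf, (hp i).eq_bot, Submodule.comap_bot,
    LinearMap.ker_eq_bot.mpr hf]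

end Module

namespace Matrix

variable (R : Type*) {n G : Type*} [Semiring R] [AddCommGroup G] (d : n → G)

def homogeneousSubmodule (g : G) : Submodule R (Matrix n n R) :=
  ⨅ (i) (j) (_ : d j - d i ≠ g), LinearMap.ker (entryLinearMap R R i j)

variable {R d}

theorem mem_homogeneousSubmodule {g : G} {x : Matrix n n R} :
    x ∈ homogeneousSubmodule R d g ↔ ∀ i j, d j - d i ≠ g → x i j = 0 := by
  simp [homogeneousSubmodule]

theorem single_mem_homogeneousSubmodule [DecidableEq n] (i j : n) (c : R) :
    single i j c ∈ homogeneousSubmodule R d (d j - d i) := by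
  rw [mem_homogeneousSubmodule]
  rintro i' j' hne
  exact single_apply_of_ne _ _ _ _ _ (by rintro ⟨rfl, rfl⟩; exact hne rfl)

theorem mul_mem_homogeneousSubmodule [Fintype n] {a b : G} {x y : Matrix n n R}
    (hx : x ∈ homogeneousSubmodule R d a) (hy : y ∈ homogeneousSubmodule R d b) :
    x * y ∈ homogeneousSubmodule R d (a + b) := by
  rw [mem_homogeneousSubmodule] at *
  intro i j hij
  refine Finset.sum_eq_zero fun r _ => show x i r * y r j = 0 from ?_
  by_cases hxr : d r - d i = a
  · rw [hy r j fun hyr => hij (by rw [← hxr, ← hyr]; abel), mul_zero]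
  · rw [hx i r hxr, zero_mul]

variable (R d) in
theorem iSupIndep_homogeneousSubmodule : iSupIndep (homogeneousSubmodule R d) := by
  intro g
  have hrest : ⨆ (h) (_ : h ≠ g), homogeneousSubmodule R d h ≤
      ⨅ (i) (j) (_ : d j - d i = g), LinearMap.ker (entryLinearMap R R i j) := by
    refine iSup₂_le fun h hne => ?_
    simp only [le_iInf_iff]
    intro i j hij x hx
    exact mem_homogeneousSubmodule.mp hx i j (hij ▸ hne.symm)
  refine Submodule.disjoint_def.mpr fun x hx hx' => ?_
  ext i j
  by_cases hij : d j - d i = g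
  · have hx'' := hrest hx'
    simp only [Submodule.mem_iInf, LinearMap.mem_ker, entryLinearMap_apply] at hx''
    exact hx'' i j hij
  · exact mem_homogeneousSubmodule.mp hx i j hij

end Matrix

@[simp] theorem coe_EJ (j : Fin 3) : (EJ F j : Matrix (Fin 3) (Fin 3) F) = single j j 1 := rfl

@[simp] theorem coe_SJ (j k : Fin 3) :
    (SJ F j k : Matrix (Fin 3) (Fin 3) F) = single j k 1 + single k j 1 := rfl

@[simp] theorem coe_jmulS (x y : H3 F) :
    (jmulS F x y : Matrix (Fin 3) (Fin 3) F) = (1 / 2 : F) • ((x : Matrix (Fin 3) (Fin 3) F) * y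
      + (y : Matrix (Fin 3) (Fin 3) F) * x) := rfl

theorem SJ_comm (j k : Fin 3) : SJ F j k = SJ F k j :=
  Subtype.ext (add_comm _ _)

theorem SJ_ne_zero {j k : Fin 3} (h : j ≠ k) : SJ F j k ≠ 0 := by
  intro h0
  have := congrFun (congrFun (congrArg Subtype.val h0) j) k
  simp [h] at this

theorem H3_eq_sum (x : H3 F) :
    x = (x : Matrix (Fin 3) (Fin 3) F) 0 0 • EJ F 0 + (x : Matrix (Fin 3) (Fin 3) F) 1 1 • EJ F 1
      + (x : Matrix (Fin 3) (Fin 3) F) 2 2 • EJ F 2 + (x : Matrix (Fin 3) (Fin 3) F) 0 1 • SJ F 0 1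
      + (x : Matrix (Fin 3) (Fin 3) F) 0 2 • SJ F 0 2
      + (x : Matrix (Fin 3) (Fin 3) F) 1 2 • SJ F 1 2 := by
  have hsymm (i j : Fin 3) :
      (x : Matrix (Fin 3) (Fin 3) F) j i = (x : Matrix (Fin 3) (Fin 3) F) i j :=
    congrFun₂ x.2 i j
  ext i j
  fin_cases i <;> fin_cases j <;> simp <;> exact hsymm _ _

theorem jmulS_SJ_self {j k : Fin 3} (h : j ≠ k) :
    jmulS F (SJ F j k) (SJ F j k) = EJ F j + EJ F k := by
  ext : 1
  simp [mul_add, add_mul, single_mul_single_same, single_mul_single_of_ne, h, h.symm,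
    -smul_single]
  module

theorem jmulS_SJ_SJ {i j k : Fin 3} (hij : i ≠ j) (hjk : j ≠ k) (hik : i ≠ k) :
    jmulS F (SJ F i j) (SJ F j k) = (1 / 2 : F) • SJ F i k := by
  ext : 1
  simp [mul_add, add_mul, single_mul_single_same, single_mul_single_of_ne, hij, hik, hjk,
    hij.symm, hik.symm, hjk.symm]

def gr5Degree : Fin 3 → ZMod 2 × ZMod 2 := ![0, (1, 1), (1, 0)]

theorem zmod2_prod_cases (g : ZMod 2 × ZMod 2) :
    g = (0, 0) ∨ g = (0, 1) ∨ g = (1, 0) ∨ g = (1, 1) := by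
  revert g
  decide

theorem gr5_zero_zero : gr5 F (0, 0) = Submodule.span F {EJ F 0, EJ F 1, EJ F 2} := by
  simp [gr5]

theorem gr5_zero_one : gr5 F (0, 1) = F ∙ SJ F 1 2 := by
  simp [gr5]

theorem gr5_one_zero : gr5 F (1, 0) = F ∙ SJ F 0 2 := by
  simp [gr5]

theorem gr5_one_one : gr5 F (1, 1) = F ∙ SJ F 0 1 := by
  simp [gr5]

theorem gr5_le_comap_homogeneousSubmodule (g : ZMod 2 × ZMod 2) :
    gr5 F g ≤ (homogeneousSubmodule F gr5Degree g).comap (symSub F).subtype := by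
  have hE (j : Fin 3) :
      EJ F j ∈ (homogeneousSubmodule F gr5Degree 0).comap (symSub F).subtype := by
    simpa using single_mem_homogeneousSubmodule (d := gr5Degree) j j (1 : F)
  have hS (j k : Fin 3) {g} (hg : gr5Degree k - gr5Degree j = g) :
      SJ F j k ∈ (homogeneousSubmodule F gr5Degree g).comap (symSub F).subtype := by
    have hsymm : gr5Degree j - gr5Degree k = g := by
      rw [← hg]; fin_cases j <;> fin_cases k <;> decide
    show single j k (1 : F) + single k j 1 ∈ homogeneousSubmodule F gr5Degree g
    exact add_mem (hg ▸ single_mem_homogeneousSubmodule j k 1)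
      (hsymm ▸ single_mem_homogeneousSubmodule k j 1)
  rcases zmod2_prod_cases g with rfl | rfl | rfl | rfl
  · rw [gr5_zero_zero, Submodule.span_le]
    rintro _ (rfl | rfl | rfl) <;> exact hE _
  · rw [gr5_zero_one, Submodule.span_singleton_le_iff_mem]
    exact hS 1 2 (by decide)
  · rw [gr5_one_zero, Submodule.span_singleton_le_iff_mem]
    exact hS 0 2 (by decide)
  · rw [gr5_one_one, Submodule.span_singleton_le_iff_mem]
    exact hS 0 1 (by decide)

theorem iSup_gr5_eq_top : ⨆ g, gr5 F g = ⊤ := by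
  refine eq_top_iff.mpr fun x _ => ?_
  have hE (j : Fin 3) : EJ F j ∈ gr5 F (0, 0) := by
    rw [gr5_zero_zero]; exact Submodule.subset_span (by fin_cases j <;> simp)
  have hsmul {g v} (hv : v ∈ gr5 F g) (c : F) : c • v ∈ ⨆ g, gr5 F g :=
    Submodule.mem_iSup_of_mem g (Submodule.smul_mem _ c hv)
  rw [H3_eq_sum F x]
  refine add_mem (add_mem (add_mem (add_mem (add_mem ?_ ?_) ?_) ?_) ?_) ?_
  exacts [hsmul (hE 0) _, hsmul (hE 1) _, hsmul (hE 2) _,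
    hsmul (gr5_one_one F ▸ Submodule.mem_span_singleton_self _) _,
    hsmul (gr5_one_zero F ▸ Submodule.mem_span_singleton_self _) _,
    hsmul (gr5_zero_one F ▸ Submodule.mem_span_singleton_self _) _]

theorem iSupIndep_gr5 : iSupIndep (gr5 F) :=
  (Submodule.iSupIndep_comap (symSub F).injective_subtype
    (iSupIndep_homogeneousSubmodule F gr5Degree)).mono (gr5_le_comap_homogeneousSubmodule F)

theorem gr5_eq_comap_homogeneousSubmodule (g : ZMod 2 × ZMod 2) :
    gr5 F g = (homogeneousSubmodule F gr5Degree g).comap (symSub F).subtype :=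
  congrFun (((Submodule.iSupIndep_comap (symSub F).injective_subtype
    (iSupIndep_homogeneousSubmodule F gr5Degree)).le_iff_eq_of_iSup_eq_top
      (iSup_gr5_eq_top F)).mp (gr5_le_comap_homogeneousSubmodule F)) g

theorem jmulS_mem_gr5 {g h : ZMod 2 × ZMod 2} {x y : H3 F} (hx : x ∈ gr5 F g)
    (hy : y ∈ gr5 F h) : jmulS F x y ∈ gr5 F (g + h) := by
  simp only [gr5_eq_comap_homogeneousSubmodule, Submodule.mem_comap, Submodule.coe_subtype,
    coe_jmulS] at *
  exact Submodule.smul_mem _ _ (add_mem (mul_mem_homogeneousSubmodule hx hy)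
    (add_comm g h ▸ mul_mem_homogeneousSubmodule hy hx))

theorem isGrading_gr5 : IsGrading F (gr5 F) :=
  ⟨DirectSum.isInternal_submodule_of_iSupIndep_of_iSup_eq_top (iSupIndep_gr5 F)
    (iSup_gr5_eq_top F), fun _ _ _ hx _ hy => jmulS_mem_gr5 F hx hy⟩

theorem exists_gr5_le_of_refines {G' : Type*} {H' : G' → Submodule F (H3 F)}
    (href : Refines F H' (gr5 F)) {g : ZMod 2 × ZMod 2} (hg : g ≠ (0, 0)) :
    ∃ g', gr5 F g ≤ H' g' := by
  obtain ⟨v, hv, hgv⟩ : ∃ v ≠ 0, gr5 F g = F ∙ v := by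
    rcases zmod2_prod_cases g with rfl | rfl | rfl | rfl
    · exact absurd rfl hg
    · exact ⟨_, SJ_ne_zero F (by decide), gr5_zero_one F⟩
    · exact ⟨_, SJ_ne_zero F (by decide), gr5_one_zero F⟩
    · exact ⟨_, SJ_ne_zero F (by decide), gr5_one_one F⟩
  obtain ⟨S, hS⟩ := href g (hgv ▸ mt Submodule.span_singleton_eq_bot.mp hv)
  rw [hgv] at hS ⊢
  exact Submodule.exists_span_singleton_le_of_eq_biSup hv hS

section Fine

variable {G' : Type*} [AddCommGroup G'] [DecidableEq G'] {H' : G' → Submodule F (H3 F)}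

theorem add_eq_of_SJ_mem (hH' : IsGrading F H') {i j k : Fin 3} (hij : i ≠ j) (hjk : j ≠ k)
    (hik : i ≠ k) {a b c : G'} (ha : SJ F i j ∈ H' a) (hb : SJ F j k ∈ H' b)
    (hc : SJ F i k ∈ H' c) : a + b = c := by
  have hprod := hH'.2 a b _ ha _ hb
  rw [jmulS_SJ_SJ F hij hjk hik] at hprod
  exact hH'.1.submodule_iSupIndep.eq_of_mem_of_mem
    (smul_ne_zero (by norm_num) (SJ_ne_zero F hik)) hprod (Submodule.smul_mem _ _ hc)

theorem EJ_add_EJ_mem_zero (hH' : IsGrading F H') {j k : Fin 3} (hjk : j ≠ k) {a : G'}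
    (ha : SJ F j k ∈ H' a) (h2a : a + a = 0) : EJ F j + EJ F k ∈ H' 0 := by
  simpa [jmulS_SJ_self F hjk, h2a] using hH'.2 a a _ ha _ ha

theorem gr5_zero_zero_le_of_SJ_mem (hH' : IsGrading F H') {a b c : G'}
    (ha : SJ F 0 1 ∈ H' a) (hb : SJ F 0 2 ∈ H' b) (hc : SJ F 1 2 ∈ H' c) :
    gr5 F (0, 0) ≤ H' 0 := by
  have hab : a + b = c :=
    add_eq_of_SJ_mem F hH' (by decide) (by decide) (by decide) (SJ_comm F 0 1 ▸ ha) hb hc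
  have hac : a + c = b := add_eq_of_SJ_mem F hH' (by decide) (by decide) (by decide) ha hc hb
  have hbc : b + c = a :=
    add_eq_of_SJ_mem F hH' (by decide) (by decide) (by decide) hb (SJ_comm F 1 2 ▸ hc) ha
  have h2a : a + a = 0 := calc
    a + a = a + (a + b) - b := by abel
    _ = 0 := by rw [hab, hac, sub_self]
  have h2b : b + b = 0 := calc
    b + b = b + (a + b) - a := by abel
    _ = 0 := by rw [hab, hbc, sub_self]
  have h2c : c + c = 0 := by rw [← hab, add_add_add_comm, h2a, h2b, add_zero]
  have h01 := EJ_add_EJ_mem_zero F hH' (by decide) ha h2a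
  have h02 := EJ_add_EJ_mem_zero F hH' (by decide) hb h2b
  have h12 := EJ_add_EJ_mem_zero F hH' (by decide) hc h2c
  have hhalf {x y z : H3 F} (hx : x ∈ H' 0) (hy : y ∈ H' 0) (hz : z ∈ H' 0) :
      (1 / 2 : F) • (x + y - z) ∈ H' 0 :=
    Submodule.smul_mem _ _ (sub_mem (add_mem hx hy) hz)
  rw [gr5_zero_zero, Submodule.span_le]
  simp only [Set.insert_subset_iff, Set.singleton_subset_iff, SetLike.mem_coe]
  refine ⟨?_, ?_, ?_⟩
  · convert hhalf h01 h02 h12 using 1; module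
  · convert hhalf h01 h12 h02 using 1; module
  · convert hhalf h02 h12 h01 using 1; module

theorem isFine_gr5 : IsFine F (gr5 F) := by
  intro G' _ _ H' hH' href
  obtain ⟨a, ha⟩ := exists_gr5_le_of_refines F href (g := (1, 1)) (by decide)
  obtain ⟨b, hb⟩ := exists_gr5_le_of_refines F href (g := (1, 0)) (by decide)
  obtain ⟨c, hc⟩ := exists_gr5_le_of_refines F href (g := (0, 1)) (by decide)
  have hzero := gr5_zero_zero_le_of_SJ_mem F hH'
    (ha (gr5_one_one F ▸ Submodule.mem_span_singleton_self _))
    (hb (gr5_one_zero F ▸ Submodule.mem_span_singleton_self _))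
    (hc (gr5_zero_one F ▸ Submodule.mem_span_singleton_self _))
  refine setOf_ne_bot_eq_of_refines (iSupIndep_gr5 F) (iSup_gr5_eq_top F)
    hH'.1.submodule_iSupIndep href fun g => ?_
  by_cases hg : g = (0, 0)
  · exact ⟨0, hg ▸ hzero⟩
  · exact exists_gr5_le_of_refines F href hg

end Fine

theorem H3_gr5_isGrading_and_fine :
    IsGrading F (gr5 F) ∧ IsFine F (gr5 F) :=
  ⟨isGrading_gr5 F, isFine_gr5 F⟩

end
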